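/- arXiv:1805.08537 — 9 statements merged into one kernel-verified Lean document; each statement's English description precedes it below -/
import Mathlib

section
/- Let u₁, u₂, u₃, u₄, u₅ : ℝ → ℝ with u₃ continuous and u₁, u₂, u₄, u₅ differentiable, satisfying for all t ∈ ℝ: u₁′ = −u₃u₅, u₂′ = u₃u₄, u₄′ = u₂u₃, u₅′ = −u₁u₃. Let U(t) = ∫₀ᵗ u₃(τ) dτ. Then for all t ∈ ℝ: u₁(t) = ((u₁(0)+u₅(0))/2)·exp(−U(t)) + ((u₁(0)−u₅(0))/2)·exp(U(t)); u₂(t) = ((u₂(0)+u₄(0))/2)·exp(U(t)) + ((u₂(0)−u₄(0))/2)·exp(−U(t)); u₄(t) = ((u₂(0)+u₄(0))/2)·exp(U(t)) − ((u₂(0)−u₄(0))/2)·exp(−U(t)); u₅(t) = ((u₁(0)+u₅(0))/2)·exp(−U(t)) − ((u₁(0)−u₅(0))/2)·exp(U(t)). -/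
open Real

theorem eq_mul_exp_sub_of_hasDerivAt {f g g' : ℝ → ℝ} (hg : ∀ t, HasDerivAt g (g' t) t)
    (hf : ∀ t, HasDerivAt f (g' t * f t) t) (t : ℝ) :
    f t = f 0 * exp (g t - g 0) := by
  have hderiv : ∀ s, HasDerivAt (fun s => f s * exp (-g s)) 0 s := fun s =>
    ((hf s).mul (hg s).neg.exp).congr_deriv (by ring)
  have hconst : f t * exp (-g t) = f 0 * exp (-g 0) :=
    is_const_of_deriv_eq_zero (fun s => (hderiv s).differentiableAt)
      (fun s => (hderiv s).deriv) t 0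
  calc f t = f t * exp (-g t) * exp (g t) := by rw [mul_assoc, ← exp_add]; simp
    _ = f 0 * exp (g t - g 0) := by rw [hconst, mul_assoc, ← exp_add]; ring_nf

/-- Expression of the extremal controls `u₁, u₂, u₄, u₅` via `U(t) = ∫₀ᵗ u₃`
and the initial values, for the vertical subsystem on SE(3) with `u₆ = 0`. -/
theorem stmt_2 (u₁ u₂ u₃ u₄ u₅ : ℝ → ℝ) (hu₃c : Continuous u₃)
    (h₁ : ∀ t, HasDerivAt u₁ (-(u₃ t * u₅ t)) t)
    (h₂ : ∀ t, HasDerivAt u₂ (u₃ t * u₄ t) t)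
    (h₄ : ∀ t, HasDerivAt u₄ (u₂ t * u₃ t) t)
    (h₅ : ∀ t, HasDerivAt u₅ (-(u₁ t * u₃ t)) t)
    (U : ℝ → ℝ) (hU : ∀ t, U t = ∫ τ in (0:ℝ)..t, u₃ τ) :
    ∀ t : ℝ,
      u₁ t = (u₁ 0 + u₅ 0) / 2 * Real.exp (-U t) + (u₁ 0 - u₅ 0) / 2 * Real.exp (U t) ∧
      u₂ t = (u₂ 0 + u₄ 0) / 2 * Real.exp (U t) + (u₂ 0 - u₄ 0) / 2 * Real.exp (-U t) ∧
      u₄ t = (u₂ 0 + u₄ 0) / 2 * Real.exp (U t) - (u₂ 0 - u₄ 0) / 2 * Real.exp (-U t) ∧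
      u₅ t = (u₁ 0 + u₅ 0) / 2 * Real.exp (-U t) - (u₁ 0 - u₅ 0) / 2 * Real.exp (U t) := by
  have hU' : ∀ t, HasDerivAt U (u₃ t) t := fun t => by
    rw [funext hU]; exact (hu₃c.integral_hasStrictDerivAt 0 t).hasDerivAt
  have hU₀ : U 0 = 0 := by simp [hU]
  -- `u₁ ± u₅` and `u₂ ± u₄` decouple into scalar equations `f' = ±u₃ f`.
  have hadd₁₅ := eq_mul_exp_sub_of_hasDerivAt (g := fun t => -U t) (fun t => (hU' t).neg)
    (f := fun t => u₁ t + u₅ t) fun t => ((h₁ t).add (h₅ t)).congr_deriv (by ring)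
  have hsub₁₅ := eq_mul_exp_sub_of_hasDerivAt hU'
    (f := fun t => u₁ t - u₅ t) fun t => ((h₁ t).sub (h₅ t)).congr_deriv (by ring)
  have hadd₂₄ := eq_mul_exp_sub_of_hasDerivAt hU'
    (f := fun t => u₂ t + u₄ t) fun t => ((h₂ t).add (h₄ t)).congr_deriv (by ring)
  have hsub₂₄ := eq_mul_exp_sub_of_hasDerivAt (g := fun t => -U t) (fun t => (hU' t).neg)
    (f := fun t => u₂ t - u₄ t) fun t => ((h₂ t).sub (h₄ t)).congr_deriv (by ring)
  intro t
  simp only [hU₀, neg_zero, sub_zero] at hadd₁₅ hsub₁₅ hadd₂₄ hsub₂₄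
  refine ⟨?_, ?_, ?_, ?_⟩ <;> linarith [hadd₁₅ t, hsub₁₅ t, hadd₂₄ t, hsub₂₄ t]
end

section
/- Let u₁, u₂, u₃, u₄, u₅ : ℝ → ℝ with u₃ continuous and u₁, u₂, u₄, u₅ differentiable, satisfying for all t ∈ ℝ: u₁′ = −u₃u₅, u₂′ = u₃u₄, u₄′ = u₂u₃, u₅′ = −u₁u₃. Let U(t) = ∫₀ᵗ u₃(τ) dτ, A = (u₁(0)+u₅(0))² + (u₂(0)−u₄(0))², and B = (u₁(0)−u₅(0))² + (u₂(0)+u₄(0))². Then for all t ∈ ℝ: u₁(t)·u₅(t) − u₂(t)·u₄(t) = (1/4)·(A·exp(−2U(t)) − B·exp(2U(t))). -/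
/-!
The combinations `u₁ + u₅`, `u₂ - u₄` solve the scalar linear equation `f' = -u₃ f`, and
`u₁ - u₅`, `u₂ + u₄` solve `f' = u₃ f`; hence they equal their initial values times
`exp (-U)`, resp. `exp U`. The claim follows from the polarization identity
`4 (u₁u₅ - u₂u₄) = (u₁ + u₅)² + (u₂ - u₄)² - (u₁ - u₅)² - (u₂ + u₄)²`.
-/

open Real

theorem eq_mul_exp_of_hasDerivAt_eq_mul {f U a : ℝ → ℝ} (hU : ∀ t, HasDerivAt U (a t) t)
    (hf : ∀ t, HasDerivAt f (a t * f t) t) (t : ℝ) : f t = f 0 * exp (U t - U 0) := by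
  have hderiv : ∀ t, HasDerivAt (fun t => f t * exp (-U t)) 0 t := fun t =>
    ((hf t).mul (hU t).neg.exp).congr_deriv (by ring)
  have hconst := is_const_of_deriv_eq_zero (fun t => (hderiv t).differentiableAt)
    (fun t => (hderiv t).deriv) t 0
  calc f t = f t * exp (-U t) * exp (U t) := by rw [mul_assoc, ← exp_add]; simp
    _ = f 0 * exp (U t - U 0) := by rw [hconst, mul_assoc, ← exp_add]; ring_nf

/-- The combination `u₁u₅ - u₂u₄` expressed via `U(t) = ∫₀ᵗ u₃` and the constants
`A = (u₁(0)+u₅(0))² + (u₂(0)-u₄(0))²`, `B = (u₁(0)-u₅(0))² + (u₂(0)+u₄(0))²`. -/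
theorem stmt_3 (u₁ u₂ u₃ u₄ u₅ : ℝ → ℝ) (hu₃c : Continuous u₃)
    (h₁ : ∀ t, HasDerivAt u₁ (-(u₃ t * u₅ t)) t)
    (h₂ : ∀ t, HasDerivAt u₂ (u₃ t * u₄ t) t)
    (h₄ : ∀ t, HasDerivAt u₄ (u₂ t * u₃ t) t)
    (h₅ : ∀ t, HasDerivAt u₅ (-(u₁ t * u₃ t)) t)
    (U : ℝ → ℝ) (hU : ∀ t, U t = ∫ τ in (0:ℝ)..t, u₃ τ)
    (A B : ℝ)
    (hA : A = (u₁ 0 + u₅ 0) ^ 2 + (u₂ 0 - u₄ 0) ^ 2)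
    (hB : B = (u₁ 0 - u₅ 0) ^ 2 + (u₂ 0 + u₄ 0) ^ 2) :
    ∀ t : ℝ,
      u₁ t * u₅ t - u₂ t * u₄ t
        = 1 / 4 * (A * Real.exp (-(2 * U t)) - B * Real.exp (2 * U t)) := by
  intro t
  have hUderiv : ∀ t, HasDerivAt U (u₃ t) t := fun t => by
    rw [funext hU]; exact (hu₃c.integral_hasStrictDerivAt 0 t).hasDerivAt
  have hU₀ : U 0 = 0 := by simp [hU]
  have hUneg : ∀ t, HasDerivAt (fun t => -U t) (-u₃ t) t := fun t => (hUderiv t).neg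
  have hp := eq_mul_exp_of_hasDerivAt_eq_mul (f := fun t => u₁ t + u₅ t) hUneg
    (fun t => ((h₁ t).add (h₅ t)).congr_deriv (by ring)) t
  have hq := eq_mul_exp_of_hasDerivAt_eq_mul (f := fun t => u₂ t - u₄ t) hUneg
    (fun t => ((h₂ t).sub (h₄ t)).congr_deriv (by ring)) t
  have hr := eq_mul_exp_of_hasDerivAt_eq_mul (f := fun t => u₁ t - u₅ t) hUderiv
    (fun t => ((h₁ t).sub (h₅ t)).congr_deriv (by ring)) t
  have hs := eq_mul_exp_of_hasDerivAt_eq_mul (f := fun t => u₂ t + u₄ t) hUderiv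
    (fun t => ((h₂ t).add (h₄ t)).congr_deriv (by ring)) t
  simp only [hU₀, neg_zero, sub_zero] at hp hq hr hs
  have hexp_neg : exp (-(2 * U t)) = exp (-U t) ^ 2 := by rw [← exp_nat_mul]; ring_nf
  have hexp : exp (2 * U t) = exp (U t) ^ 2 := by rw [← exp_nat_mul]; ring_nf
  rw [hA, hB, hexp_neg, hexp]
  linear_combination (1 / 4 : ℝ) * ((u₁ t + u₅ t + (u₁ 0 + u₅ 0) * exp (-U t)) * hp
    + (u₂ t - u₄ t + (u₂ 0 - u₄ 0) * exp (-U t)) * hq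
    - (u₁ t - u₅ t + (u₁ 0 - u₅ 0) * exp (U t)) * hr
    - (u₂ t + u₄ t + (u₂ 0 + u₄ 0) * exp (U t)) * hs)
end

section
/- Let u₃₀, u₄₀, u₅₀ be real numbers, not all zero, set B₁ = u₄₀² + u₅₀² and b = √(u₃₀² + u₄₀² + u₅₀²). Then for every t ∈ ℝ the quantity (1/2)·[(1 + u₃₀/b)·exp(−bt) + (1 − u₃₀/b)·exp(bt)] is strictly positive, and the function U(t) = −ln((1/2)·[(1 + u₃₀/b)·exp(−bt) + (1 − u₃₀/b)·exp(bt)]) is twice differentiable on ℝ and satisfies U″(t) = −B₁·exp(2U(t)) for all t ∈ ℝ, together with U(0) = 0 and U′(0) = u₃₀. -/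
/-!
With `F(t) = ½((1 + u₃₀/b) e^{-bt} + (1 - u₃₀/b) e^{bt})` one has `F'' = b² F`, so
`U = -log F` satisfies `U'' = -(b² F² - F'²) e^{2U}`. The first integral `b² F² - F'²` is
`b² (1 + u₃₀/b)(1 - u₃₀/b) = b² - u₃₀² = B₁`, and both coefficients are nonnegative because
`|u₃₀| ≤ b`, which makes `F` positive.
-/

open Real

noncomputable def expCombo (b c₁ c₂ t : ℝ) : ℝ :=
  1 / 2 * (c₁ * exp (-(b * t)) + c₂ * exp (b * t))

theorem expCombo_pos {c₁ c₂ : ℝ} (h₁ : 0 ≤ c₁) (h₂ : 0 ≤ c₂) (h : 0 < c₁ + c₂) (b t : ℝ) :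
    0 < expCombo b c₁ c₂ t := by
  unfold expCombo
  rcases h₁.eq_or_lt with rfl | h₁
  · have : 0 < c₂ := by linarith
    positivity
  · positivity

theorem expCombo_zero (b c₁ c₂ : ℝ) : expCombo b c₁ c₂ 0 = (c₁ + c₂) / 2 := by
  simp only [expCombo, mul_zero, neg_zero, exp_zero]
  ring

theorem hasDerivAt_expCombo (b c₁ c₂ t : ℝ) :
    HasDerivAt (expCombo b c₁ c₂) (expCombo b (-(b * c₁)) (b * c₂) t) t := by
  have hbt : HasDerivAt (fun t : ℝ => b * t) b t := by
    simpa using (hasDerivAt_id t).const_mul b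
  refine (((hbt.neg.exp.const_mul c₁).add (hbt.exp.const_mul c₂)).const_mul
    (1 / 2 : ℝ)).congr_deriv ?_
  simp only [expCombo, Pi.neg_apply]
  ring

theorem hasDerivAt_expCombo_neg_mul_mul (b c₁ c₂ t : ℝ) :
    HasDerivAt (expCombo b (-(b * c₁)) (b * c₂)) (b ^ 2 * expCombo b c₁ c₂ t) t := by
  refine (hasDerivAt_expCombo b _ _ t).congr_deriv ?_
  unfold expCombo
  ring

theorem sq_mul_expCombo_sq_sub_sq (b c₁ c₂ t : ℝ) :
    b ^ 2 * expCombo b c₁ c₂ t ^ 2 - expCombo b (-(b * c₁)) (b * c₂) t ^ 2 = b ^ 2 * (c₁ * c₂) := by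
  have hexp : exp (-(b * t)) * exp (b * t) = 1 := by rw [← exp_add]; simp
  unfold expCombo
  linear_combination b ^ 2 * c₁ * c₂ * hexp

theorem hasDerivAt_deriv_neg_log {F F' F'' : ℝ → ℝ} (hpos : ∀ t, 0 < F t)
    (hF : ∀ t, HasDerivAt F (F' t) t) (hF' : ∀ t, HasDerivAt F' (F'' t) t) (t : ℝ) :
    HasDerivAt (deriv fun s => -log (F s)) (-((F'' t * F t - F' t * F' t) / F t ^ 2)) t := by
  have hderiv : deriv (fun s => -log (F s)) = fun s => -(F' s / F s) :=
    funext fun s => ((hF s).log (hpos s).ne').neg.deriv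
  rw [hderiv]
  exact ((hF' t).div (hF t) (hpos t).ne').neg

theorem exp_two_mul_neg_log {x : ℝ} (hx : 0 < x) : exp (2 * -log x) = (x ^ 2)⁻¹ := by
  rw [two_mul, exp_add, exp_neg, exp_log hx, sq, mul_inv]

theorem hasDerivAt_deriv_neg_log_expCombo {b c₁ c₂ : ℝ} (hpos : ∀ t, 0 < expCombo b c₁ c₂ t)
    (t : ℝ) :
    HasDerivAt (deriv fun s => -log (expCombo b c₁ c₂ s))
      (-(b ^ 2 * (c₁ * c₂) * exp (2 * -log (expCombo b c₁ c₂ t)))) t := by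
  refine (hasDerivAt_deriv_neg_log hpos (hasDerivAt_expCombo b c₁ c₂)
    (hasDerivAt_expCombo_neg_mul_mul b c₁ c₂) t).congr_deriv ?_
  rw [exp_two_mul_neg_log (hpos t), ← sq_mul_expCombo_sq_sub_sq b c₁ c₂ t]
  field_simp

theorem sq_add_sq_add_sq_pos {x y z : ℝ} (h : ¬(x = 0 ∧ y = 0 ∧ z = 0)) :
    0 < x ^ 2 + y ^ 2 + z ^ 2 := by
  by_contra! hle
  apply h
  refine ⟨?_, ?_, ?_⟩ <;> nlinarith [sq_nonneg x, sq_nonneg y, sq_nonneg z]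

theorem one_add_div_nonneg_of_abs_le {u b : ℝ} (hu : |u| ≤ b) (hb : 0 < b) :
    0 ≤ 1 + u / b ∧ 0 ≤ 1 - u / b := by
  obtain ⟨hlow, hupp⟩ : -1 ≤ u / b ∧ u / b ≤ 1 := by
    rw [← abs_le, abs_div, abs_of_pos hb, div_le_one hb]
    exact hu
  constructor <;> linarith

/-- Explicit solution of the IVP `U'' = -B₁ e^{2U}`, `U(0) = 0`, `U'(0) = u₃₀`
(the special case `A = 0`). -/
theorem stmt_5 (u₃₀ u₄₀ u₅₀ : ℝ)
    (hne : ¬(u₃₀ = 0 ∧ u₄₀ = 0 ∧ u₅₀ = 0))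
    (B₁ b : ℝ)
    (hB₁ : B₁ = u₄₀ ^ 2 + u₅₀ ^ 2)
    (hb : b = Real.sqrt (u₃₀ ^ 2 + u₄₀ ^ 2 + u₅₀ ^ 2))
    (U : ℝ → ℝ)
    (hU : ∀ t, U t = -Real.log (1 / 2 *
      ((1 + u₃₀ / b) * Real.exp (-(b * t)) + (1 - u₃₀ / b) * Real.exp (b * t)))) :
    (∀ t : ℝ, 0 < 1 / 2 *
      ((1 + u₃₀ / b) * Real.exp (-(b * t)) + (1 - u₃₀ / b) * Real.exp (b * t))) ∧
    (∀ t, DifferentiableAt ℝ U t) ∧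
    (∀ t, DifferentiableAt ℝ (deriv U) t) ∧
    (∀ t, deriv (deriv U) t = -(B₁ * Real.exp (2 * U t))) ∧
    U 0 = 0 ∧ deriv U 0 = u₃₀ := by
  have hsum := sq_add_sq_add_sq_pos hne
  have hbpos : 0 < b := hb ▸ sqrt_pos.mpr hsum
  have hb2 : b ^ 2 = u₃₀ ^ 2 + u₄₀ ^ 2 + u₅₀ ^ 2 := hb ▸ sq_sqrt hsum.le
  obtain ⟨hc₁, hc₂⟩ := one_add_div_nonneg_of_abs_le (hb ▸ abs_le_sqrt (by nlinarith)) hbpos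
  have hFpos (t : ℝ) : 0 < expCombo b (1 + u₃₀ / b) (1 - u₃₀ / b) t :=
    expCombo_pos hc₁ hc₂ (by linarith) b t
  have hcoeff : b ^ 2 * ((1 + u₃₀ / b) * (1 - u₃₀ / b)) = B₁ := by
    field_simp
    linear_combination hb2 - hB₁
  obtain rfl : U = fun t => -log (expCombo b (1 + u₃₀ / b) (1 - u₃₀ / b) t) := funext hU
  have hdU (t : ℝ) :
      HasDerivAt (fun s => -log (expCombo b (1 + u₃₀ / b) (1 - u₃₀ / b) s)) _ t :=
    ((hasDerivAt_expCombo b _ _ t).log (hFpos t).ne').neg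
  have hdU' := hasDerivAt_deriv_neg_log_expCombo hFpos
  refine ⟨hFpos, fun t => (hdU t).differentiableAt, fun t => (hdU' t).differentiableAt,
    fun t => by rw [(hdU' t).deriv, hcoeff], ?_, ?_⟩
  · simp only [expCombo_zero]
    norm_num
  · rw [(hdU 0).deriv, expCombo_zero, expCombo_zero]
    field_simp [hbpos.ne']
    ring
end

section
/- Let u₁, u₂, u₃, u₄, u₅ : ℝ → ℝ be differentiable functions satisfying for all t ∈ ℝ: u₁′ = −u₃u₅, u₂′ = u₃u₄, u₃′ = u₁u₅ − u₂u₄, u₄′ = u₂u₃, u₅′ = −u₁u₃. Assume u₁(0) = −u₅(0), u₂(0) = u₄(0), and that (u₃(0), u₄(0), u₅(0)) ≠ (0,0,0). Set b = √(u₃(0)² + u₄(0)² + u₅(0)²). Then for all t ∈ ℝ: u₃(t) = [(b + u₃(0))·exp(−bt) − (b − u₃(0))·exp(bt)] / [(1 + u₃(0)/b)·exp(−bt) + (1 − u₃(0)/b)·exp(bt)]. -/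
/-!
The quantities `u₁ + u₅` and `u₂ - u₄` satisfy the linear equation `y' = -u₃ y`, so they vanish
for all time once they vanish at `0`. Together with the
conserved quantity `u₃² + u₄² + u₅² = b²` this turns the equation for `u₃` into the Riccati
equation `u₃' = u₃² - b²`. Its solution with `u₃(0) = c`, `|c| ≤ b`, is a quotient `num / den` of
exponential sums with `num' = -b² den` and `den' = -num`, and `den > 0` because `|c| ≤ b`.
Uniqueness for both the linear and the Riccati equation reduces to the linear scalar equation
`y' = a y`, solved by the integrating factor `exp (-∫ a)`.
-/

open Real

theorem eq_zero_of_hasDerivAt_mul_self {a y : ℝ → ℝ} (ha : Continuous a)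
    (hy : ∀ t, HasDerivAt y (a t * y t) t) (h0 : y 0 = 0) (t : ℝ) : y t = 0 := by
  set A : ℝ → ℝ := fun t => ∫ s in (0 : ℝ)..t, a s
  have hA : ∀ t, HasDerivAt A (a t) t := fun t =>
    intervalIntegral.integral_hasDerivAt_right (ha.intervalIntegrable 0 t)
      (ha.stronglyMeasurableAtFilter _ _) ha.continuousAt
  have hconst : ∀ s, HasDerivAt (fun s => y s * exp (-A s)) 0 s := fun s =>
    ((hy s).mul (hA s).neg.exp).congr_deriv (by ring)
  have key := is_const_of_deriv_eq_zero (fun s => (hconst s).differentiableAt)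
    (fun s => (hconst s).deriv) t 0
  simpa [A, h0, (exp_pos _).ne'] using key

namespace Riccati

variable (b c : ℝ)

noncomputable def num (t : ℝ) : ℝ :=
  (b + c) * exp (-(b * t)) - (b - c) * exp (b * t)

noncomputable def den (t : ℝ) : ℝ :=
  (1 + c / b) * exp (-(b * t)) + (1 - c / b) * exp (b * t)

noncomputable def sol (t : ℝ) : ℝ := num b c t / den b c t

variable {b c}

theorem hasDerivAt_exp_mul (t : ℝ) :
    HasDerivAt (fun s => exp (b * s)) (b * exp (b * t)) t := by
  simpa [mul_comm] using ((hasDerivAt_id t).const_mul b).exp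

theorem hasDerivAt_exp_neg_mul (t : ℝ) :
    HasDerivAt (fun s => exp (-(b * s))) (-b * exp (-(b * t))) t := by
  simpa [mul_comm] using ((hasDerivAt_id t).const_mul b).neg.exp

theorem hasDerivAt_num (hb : b ≠ 0) (t : ℝ) :
    HasDerivAt (num b c) (-b ^ 2 * den b c t) t := by
  refine (((hasDerivAt_exp_neg_mul t).const_mul (b + c)).sub
    ((hasDerivAt_exp_mul t).const_mul (b - c))).congr_deriv ?_
  simp only [den]
  field_simp
  ring

theorem hasDerivAt_den (hb : b ≠ 0) (t : ℝ) :
    HasDerivAt (den b c) (-num b c t) t := by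
  refine (((hasDerivAt_exp_neg_mul t).const_mul (1 + c / b)).add
    ((hasDerivAt_exp_mul t).const_mul (1 - c / b))).congr_deriv ?_
  simp only [num]
  field_simp
  ring

theorem den_pos (hb : 0 < b) (hc : |c| ≤ b) (t : ℝ) : 0 < den b c t := by
  have hcb : |c / b| ≤ 1 := by rw [abs_div, abs_of_pos hb, div_le_one hb]; exact hc
  obtain ⟨hl, hr⟩ := abs_le.mp hcb
  have hx := exp_pos (-(b * t))
  have hy := exp_pos (b * t)
  rcases hr.eq_or_lt with h | h
  · simp only [den, h]; linarith
  · have h₁ : 0 ≤ (1 + c / b) * exp (-(b * t)) := mul_nonneg (by linarith) hx.le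
    have h₂ : 0 < (1 - c / b) * exp (b * t) := mul_pos (by linarith) hy
    exact add_pos_of_nonneg_of_pos h₁ h₂

theorem hasDerivAt_sol (hb : 0 < b) (hc : |c| ≤ b) (t : ℝ) :
    HasDerivAt (sol b c) (sol b c t ^ 2 - b ^ 2) t := by
  have hden := (den_pos hb hc t).ne'
  refine ((hasDerivAt_num hb.ne' t).div (hasDerivAt_den hb.ne' t) hden).congr_deriv ?_
  simp only [sol]
  field_simp
  ring

theorem sol_zero : sol b c 0 = c := by
  simp only [sol, num, den, mul_zero, neg_zero, exp_zero, mul_one]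
  ring

theorem eq_sol_of_hasDerivAt (hb : 0 < b) (hc : |c| ≤ b) {y : ℝ → ℝ}
    (hy : ∀ t, HasDerivAt y (y t ^ 2 - b ^ 2) t) (h0 : y 0 = c) (t : ℝ) : y t = sol b c t := by
  have hsol := hasDerivAt_sol hb hc
  have hcont : Continuous fun t => y t + sol b c t :=
    (Differentiable.continuous fun s => (hy s).differentiableAt).add
      (Differentiable.continuous fun s => (hsol s).differentiableAt)
  have hdiff := eq_zero_of_hasDerivAt_mul_self (y := fun t => y t - sol b c t) hcont
    (fun t => ((hy t).sub (hsol t)).congr_deriv (by ring)) (by rw [h0, sol_zero, sub_self]) t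
  exact sub_eq_zero.mp hdiff

end Riccati

section ExtremalSystem

variable {u₁ u₂ u₃ u₄ u₅ : ℝ → ℝ}
  (h₁ : ∀ t, HasDerivAt u₁ (-(u₃ t * u₅ t)) t)
  (h₂ : ∀ t, HasDerivAt u₂ (u₃ t * u₄ t) t)
  (h₃ : ∀ t, HasDerivAt u₃ (u₁ t * u₅ t - u₂ t * u₄ t) t)
  (h₄ : ∀ t, HasDerivAt u₄ (u₂ t * u₃ t) t)
  (h₅ : ∀ t, HasDerivAt u₅ (-(u₁ t * u₃ t)) t)

include h₃ h₄ h₅ in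
theorem sq_add_sq_add_sq_eq (t : ℝ) :
    u₃ t ^ 2 + u₄ t ^ 2 + u₅ t ^ 2 = u₃ 0 ^ 2 + u₄ 0 ^ 2 + u₅ 0 ^ 2 := by
  have hconst : ∀ s, HasDerivAt (fun s => u₃ s ^ 2 + u₄ s ^ 2 + u₅ s ^ 2) 0 s := fun s =>
    ((((h₃ s).pow 2).add ((h₄ s).pow 2)).add ((h₅ s).pow 2)).congr_deriv (by push_cast; ring)
  exact is_const_of_deriv_eq_zero (fun s => (hconst s).differentiableAt)
    (fun s => (hconst s).deriv) t 0

include h₁ h₃ h₅ in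
theorem add_eq_zero_of_add_eq_zero (h0 : u₁ 0 + u₅ 0 = 0) (t : ℝ) : u₁ t + u₅ t = 0 :=
  eq_zero_of_hasDerivAt_mul_self (a := fun s => -u₃ s) (y := fun s => u₁ s + u₅ s)
    (Differentiable.continuous fun s => (h₃ s).differentiableAt).neg
    (fun s => ((h₁ s).add (h₅ s)).congr_deriv (by ring)) h0 t

include h₂ h₃ h₄ in
theorem sub_eq_zero_of_sub_eq_zero (h0 : u₂ 0 - u₄ 0 = 0) (t : ℝ) : u₂ t - u₄ t = 0 :=
  eq_zero_of_hasDerivAt_mul_self (a := fun s => -u₃ s) (y := fun s => u₂ s - u₄ s)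
    (Differentiable.continuous fun s => (h₃ s).differentiableAt).neg
    (fun s => ((h₂ s).sub (h₄ s)).congr_deriv (by ring)) h0 t

include h₁ h₂ h₃ h₄ h₅ in
theorem hasDerivAt_u₃_riccati (hA₁ : u₁ 0 = -u₅ 0) (hA₂ : u₂ 0 = u₄ 0) (t : ℝ) :
    HasDerivAt u₃ (u₃ t ^ 2 - (u₃ 0 ^ 2 + u₄ 0 ^ 2 + u₅ 0 ^ 2)) t := by
  have h15 := add_eq_zero_of_add_eq_zero h₁ h₃ h₅ (by rw [hA₁, neg_add_cancel]) t
  have h24 := sub_eq_zero_of_sub_eq_zero h₂ h₃ h₄ (by rw [hA₂, sub_self]) t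
  refine (h₃ t).congr_deriv ?_
  linear_combination u₅ t * h15 - u₄ t * h24 - sq_add_sq_add_sq_eq h₃ h₄ h₅ t

end ExtremalSystem

/-- Explicit formula for the extremal control `u₃` in the special case
`A = 0`, i.e. `u₁(0) = -u₅(0)`, `u₂(0) = u₄(0)`. -/
theorem stmt_6 (u₁ u₂ u₃ u₄ u₅ : ℝ → ℝ)
    (h₁ : ∀ t, HasDerivAt u₁ (-(u₃ t * u₅ t)) t)
    (h₂ : ∀ t, HasDerivAt u₂ (u₃ t * u₄ t) t)
    (h₃ : ∀ t, HasDerivAt u₃ (u₁ t * u₅ t - u₂ t * u₄ t) t)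
    (h₄ : ∀ t, HasDerivAt u₄ (u₂ t * u₃ t) t)
    (h₅ : ∀ t, HasDerivAt u₅ (-(u₁ t * u₃ t)) t)
    (hA₁ : u₁ 0 = -u₅ 0) (hA₂ : u₂ 0 = u₄ 0)
    (hne : ¬(u₃ 0 = 0 ∧ u₄ 0 = 0 ∧ u₅ 0 = 0))
    (b : ℝ) (hb : b = Real.sqrt ((u₃ 0) ^ 2 + (u₄ 0) ^ 2 + (u₅ 0) ^ 2)) :
    ∀ t : ℝ,
      u₃ t = ((b + u₃ 0) * Real.exp (-(b * t)) - (b - u₃ 0) * Real.exp (b * t)) /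
        ((1 + u₃ 0 / b) * Real.exp (-(b * t)) + (1 - u₃ 0 / b) * Real.exp (b * t)) := by
  have hpos : 0 < u₃ 0 ^ 2 + u₄ 0 ^ 2 + u₅ 0 ^ 2 := by
    rcases (by tauto : u₃ 0 ≠ 0 ∨ u₄ 0 ≠ 0 ∨ u₅ 0 ≠ 0) with h | h | h <;> positivity
  have hb_pos : 0 < b := hb ▸ sqrt_pos.mpr hpos
  have hb_sq : b ^ 2 = u₃ 0 ^ 2 + u₄ 0 ^ 2 + u₅ 0 ^ 2 := hb ▸ sq_sqrt hpos.le
  have hc : |u₃ 0| ≤ b := abs_le_of_sq_le_sq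
    (by rw [hb_sq]; linarith [sq_nonneg (u₄ 0), sq_nonneg (u₅ 0)]) hb_pos.le
  intro t
  exact Riccati.eq_sol_of_hasDerivAt hb_pos hc
    (fun t => hb_sq ▸ hasDerivAt_u₃_riccati h₁ h₂ h₃ h₄ h₅ hA₁ hA₂ t) rfl t
end

section
/- Let u₃₀, u₄₀, u₅₀ be real numbers, not all zero, set B₁ = u₄₀² + u₅₀² and b = √(u₃₀² + u₄₀² + u₅₀²). Then for every t ∈ ℝ the quantity (1/2)·[(1 + u₃₀/b)·exp(bt) + (1 − u₃₀/b)·exp(−bt)] is strictly positive, and the function U(t) = ln((1/2)·[(1 + u₃₀/b)·exp(bt) + (1 − u₃₀/b)·exp(−bt)]) is twice differentiable on ℝ and satisfies U″(t) = B₁·exp(−2U(t)) for all t ∈ ℝ, together with U(0) = 0 and U′(0) = u₃₀. -/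
/-!
Write `f t = ½ (A e^{bt} + C e^{-bt})` with `A = 1 + u₃₀/b`, `C = 1 - u₃₀/b`. Since `|u₃₀| ≤ b`,
both coefficients are nonnegative and `A + C = 2`, so `f > 0`. Moreover `f'' = b² f` and the
Wronskian-type quantity `f'' f - f'² = b² A C = b² - u₃₀² = B₁` is constant, so
`(log f)'' = (f'' f - f'²) / f² = B₁ e^{-2 log f}`.
-/

open Real

noncomputable def expComb (A C b t : ℝ) : ℝ :=
  1 / 2 * (A * exp (b * t) + C * exp (-(b * t)))

theorem expComb_pos {A C : ℝ} (hA : 0 ≤ A) (hC : 0 ≤ C) (hAC : 0 < A + C) (b t : ℝ) :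
    0 < expComb A C b t := by
  unfold expComb
  rcases hA.lt_or_eq with hA | rfl
  · have := mul_pos hA (exp_pos (b * t))
    have := mul_nonneg hC (exp_pos (-(b * t))).le
    linarith
  · have := mul_pos (by simpa using hAC) (exp_pos (-(b * t)))
    linarith

section

variable (A C b : ℝ)

theorem expComb_zero : expComb A C b 0 = (A + C) / 2 := by
  simp only [expComb, mul_zero, neg_zero, exp_zero]
  ring

theorem hasDerivAt_expComb (t : ℝ) :
    HasDerivAt (expComb A C b) (expComb (b * A) (-(b * C)) b t) t := by
  have hexp (k : ℝ) : HasDerivAt (fun s => exp (k * s)) (exp (k * t) * k) t := by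
    simpa using ((hasDerivAt_id t).const_mul k).exp
  have hneg : HasDerivAt (fun s => exp (-(b * s))) (exp (-(b * t)) * -b) t := by
    simpa only [neg_mul] using hexp (-b)
  refine (((hexp b).const_mul A).add (hneg.const_mul C)).const_mul (1 / 2) |>.congr_deriv ?_
  simp only [expComb]
  ring

theorem hasDerivAt_expComb_deriv (t : ℝ) :
    HasDerivAt (expComb (b * A) (-(b * C)) b) (b ^ 2 * expComb A C b t) t := by
  convert hasDerivAt_expComb (b * A) (-(b * C)) b t using 1
  simp only [expComb]
  ring

theorem expComb_wronskian (t : ℝ) :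
    b ^ 2 * expComb A C b t * expComb A C b t
        - expComb (b * A) (-(b * C)) b t * expComb (b * A) (-(b * C)) b t
      = b ^ 2 * A * C := by
  have hexp : exp (b * t) * exp (-(b * t)) = 1 := by rw [← exp_add, add_neg_cancel, exp_zero]
  simp only [expComb]
  linear_combination (b ^ 2 * A * C) * hexp

end

theorem exp_neg_two_mul_log {x : ℝ} (hx : 0 < x) : exp (-(2 * log x)) = (x ^ 2)⁻¹ := by
  rw [exp_neg, show 2 * log x = log (x ^ 2) by rw [log_pow]; norm_num, exp_log (pow_pos hx 2)]

section LogOfPositive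

variable {f f' f'' : ℝ → ℝ} (hf : ∀ t, 0 < f t) (hf' : ∀ t, HasDerivAt f (f' t) t)
include hf hf'

theorem deriv_log_comp_eq_div : deriv (fun t => log (f t)) = fun t => f' t / f t :=
  funext fun t => ((hf' t).log (hf t).ne').deriv

/-- If `f'' f - f'²` is a constant `c`, then `g = log f` solves `g'' = c e^{-2g}`. -/
theorem hasDerivAt_div_of_wronskian_eq {c : ℝ} (hf'' : ∀ t, HasDerivAt f' (f'' t) t)
    (hc : ∀ t, f'' t * f t - f' t * f' t = c) (t : ℝ) :
    HasDerivAt (fun t => f' t / f t) (c * exp (-(2 * log (f t)))) t := by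
  refine ((hf'' t).div (hf' t) (hf t).ne').congr_deriv ?_
  rw [hc, exp_neg_two_mul_log (hf t), div_eq_mul_inv]

end LogOfPositive

/-- Explicit solution of the IVP `U'' = B₁ e^{-2U}`, `U(0) = 0`, `U'(0) = u₃₀`
(the special case `B = 0`). -/
theorem stmt_7 (u₃₀ u₄₀ u₅₀ : ℝ)
    (hne : ¬(u₃₀ = 0 ∧ u₄₀ = 0 ∧ u₅₀ = 0))
    (B₁ b : ℝ)
    (hB₁ : B₁ = u₄₀ ^ 2 + u₅₀ ^ 2)
    (hb : b = Real.sqrt (u₃₀ ^ 2 + u₄₀ ^ 2 + u₅₀ ^ 2))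
    (U : ℝ → ℝ)
    (hU : ∀ t, U t = Real.log (1 / 2 *
      ((1 + u₃₀ / b) * Real.exp (b * t) + (1 - u₃₀ / b) * Real.exp (-(b * t))))) :
    (∀ t : ℝ, 0 < 1 / 2 *
      ((1 + u₃₀ / b) * Real.exp (b * t) + (1 - u₃₀ / b) * Real.exp (-(b * t)))) ∧
    (∀ t, DifferentiableAt ℝ U t) ∧
    (∀ t, DifferentiableAt ℝ (deriv U) t) ∧
    (∀ t, deriv (deriv U) t = B₁ * Real.exp (-(2 * U t))) ∧
    U 0 = 0 ∧ deriv U 0 = u₃₀ := by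
  have hS : 0 < u₃₀ ^ 2 + u₄₀ ^ 2 + u₅₀ ^ 2 := by
    by_contra! h
    exact hne ⟨by nlinarith [sq_nonneg u₄₀, sq_nonneg u₅₀], by nlinarith [sq_nonneg u₃₀, sq_nonneg u₅₀],
      by nlinarith [sq_nonneg u₃₀, sq_nonneg u₄₀]⟩
  have hbpos : 0 < b := hb ▸ sqrt_pos.mpr hS
  have hb2 : b ^ 2 = u₃₀ ^ 2 + u₄₀ ^ 2 + u₅₀ ^ 2 := hb ▸ sq_sqrt hS.le
  have hub : |u₃₀ / b| ≤ 1 := by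
    rw [abs_div, abs_of_pos hbpos, div_le_one hbpos, hb]
    exact abs_le_sqrt (by nlinarith)
  obtain ⟨hA, hC⟩ : 0 ≤ 1 + u₃₀ / b ∧ 0 ≤ 1 - u₃₀ / b := by
    constructor <;> linarith [abs_le.mp hub]
  have hAC : b ^ 2 * (1 + u₃₀ / b) * (1 - u₃₀ / b) = B₁ := by
    field_simp
    linear_combination hb2 - hB₁
  set f := expComb (1 + u₃₀ / b) (1 - u₃₀ / b) b
  obtain rfl : U = fun t => log (f t) := funext hU
  have hpos (t : ℝ) : 0 < f t := expComb_pos hA hC (by ring_nf; norm_num) b t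
  have hf' := hasDerivAt_expComb (1 + u₃₀ / b) (1 - u₃₀ / b) b
  have hderiv := deriv_log_comp_eq_div hpos hf'
  have hf'' := hasDerivAt_div_of_wronskian_eq hpos hf'
    (hasDerivAt_expComb_deriv (1 + u₃₀ / b) (1 - u₃₀ / b) b) (c := B₁)
    fun t => (expComb_wronskian _ _ b t).trans hAC
  have hf0 : f 0 = 1 := (expComb_zero _ _ b).trans (by ring)
  refine ⟨hpos, fun t => ((hf' t).log (hpos t).ne').differentiableAt,
    fun t => hderiv ▸ (hf'' t).differentiableAt, fun t => by rw [hderiv, (hf'' t).deriv], ?_, ?_⟩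
  · simp only [hf0, log_one]
  · simp only [hderiv, hf0, expComb_zero, div_one]
    field_simp
    ring
end

section
/- Let u₁, u₂, u₃, u₄, u₅ : ℝ → ℝ be differentiable functions satisfying for all t ∈ ℝ: u₁′ = −u₃u₅, u₂′ = u₃u₄, u₃′ = u₁u₅ − u₂u₄, u₄′ = u₂u₃, u₅′ = −u₁u₃. Assume u₁(0) = u₅(0), u₂(0) = −u₄(0), and that (u₃(0), u₄(0), u₅(0)) ≠ (0,0,0). Set b = √(u₃(0)² + u₄(0)² + u₅(0)²). Then for all t ∈ ℝ: u₃(t) = [(b + u₃(0))·exp(bt) − (b − u₃(0))·exp(−bt)] / [(1 + u₃(0)/b)·exp(bt) + (1 − u₃(0)/b)·exp(−bt)]. -/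
/-!
Since `(u₁ - u₅)' = u₃ (u₁ - u₅)` and `(u₂ + u₄)' = u₃ (u₂ + u₄)`, the condition `B = 0` persists
for all time, and `u₃² + u₄² + u₅²` is a first integral. Together these reduce the equation for `u₃`
to the Riccati equation `y' = b² - y²`, whose solution through `y 0` is the stated quotient `N / D`:
the defect `w = y D - N` satisfies the linear equation `w' = -y w` with `w 0 = 0`, and `D` never
vanishes because `|y 0| ≤ |b|`.
-/

open Real

theorem eq_zero_of_hasDerivAt_mul_self_s8 {f g : ℝ → ℝ} (hg : Continuous g)
    (hf : ∀ t, HasDerivAt f (g t * f t) t) {t₀ : ℝ} (h₀ : f t₀ = 0) (t : ℝ) : f t = 0 := by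
  -- `f · exp (-∫ g)` has zero derivative
  set G : ℝ → ℝ := fun t => ∫ s in t₀..t, g s
  have hF : ∀ t, HasDerivAt (fun t => f t * exp (-G t)) 0 t := fun t => by
    have hG := (hg.integral_hasStrictDerivAt t₀ t).hasDerivAt
    exact ((hf t).mul hG.neg.exp).congr_deriv (by ring)
  have hconst := is_const_of_deriv_eq_zero (fun x => (hF x).differentiableAt)
    (fun x => (hF x).deriv) t t₀
  simpa [h₀, exp_ne_zero] using hconst

theorem riccati_eq_div {y : ℝ → ℝ} {b : ℝ} (hy : ∀ t, HasDerivAt y (b ^ 2 - y t ^ 2) t)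
    (h₀ : y 0 ^ 2 ≤ b ^ 2) (t : ℝ) :
    y t = ((b + y 0) * exp (b * t) - (b - y 0) * exp (-(b * t))) /
      ((1 + y 0 / b) * exp (b * t) + (1 - y 0 / b) * exp (-(b * t))) := by
  set a := y 0
  set c := a / b
  -- `b * (a / b) = a` also when `b = 0`, because then `a = 0`
  have hbc : b * c = a := by
    rcases eq_or_ne b 0 with rfl | hb
    · rw [zero_mul, eq_comm, ← sq_eq_zero_iff]
      exact le_antisymm (by simpa using h₀) (sq_nonneg a)
    · exact mul_div_cancel₀ a hb
  have hc : c ^ 2 ≤ 1 := by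
    rcases eq_or_ne b 0 with rfl | hb
    · simp [c]
    · rw [div_pow, div_le_one (by positivity)]; exact h₀
  set N : ℝ → ℝ := fun t => (b + a) * exp (b * t) - (b - a) * exp (-(b * t))
  set D : ℝ → ℝ := fun t => (1 + c) * exp (b * t) + (1 - c) * exp (-(b * t))
  have hE : ∀ t, HasDerivAt (fun t => exp (b * t)) (exp (b * t) * b) t := fun t => by
    simpa using ((hasDerivAt_id t).const_mul b).exp
  have hF : ∀ t, HasDerivAt (fun t => exp (-(b * t))) (exp (-(b * t)) * -b) t := fun t => by
    simpa using ((hasDerivAt_id t).const_mul b).neg.exp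
  have hD : ∀ t, HasDerivAt D (N t) t := fun t =>
    (((hE t).const_mul _).add ((hF t).const_mul _)).congr_deriv (by
      linear_combination (exp (b * t) + exp (-(b * t))) * hbc)
  have hN : ∀ t, HasDerivAt N (b ^ 2 * D t) t := fun t =>
    (((hE t).const_mul _).sub ((hF t).const_mul _)).congr_deriv (by
      linear_combination (-b * (exp (b * t) - exp (-(b * t)))) * hbc)
  have hw : ∀ t, HasDerivAt (fun t => y t * D t - N t) (-y t * (y t * D t - N t)) t := fun t =>
    (((hy t).mul (hD t)).sub (hN t)).congr_deriv (by ring)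
  have hw₀ : y 0 * D 0 - N 0 = 0 := by simp only [D, N, mul_zero, neg_zero, exp_zero]; ring
  have hDpos : 0 < D t := by
    have h1 : 0 ≤ 1 + c := by nlinarith
    have h2 : 0 ≤ 1 - c := by nlinarith
    rcases le_total 0 c with hc0 | hc0
    · exact add_pos_of_pos_of_nonneg (mul_pos (by linarith) (exp_pos _))
        (mul_nonneg h2 (exp_pos _).le)
    · exact add_pos_of_nonneg_of_pos (mul_nonneg h1 (exp_pos _).le)
        (mul_pos (by linarith) (exp_pos _))
  rw [eq_div_iff hDpos.ne']
  exact sub_eq_zero.mp (eq_zero_of_hasDerivAt_mul_self_s8 (continuous_iff_continuousAt.mpr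
    fun t => (hy t).continuousAt).neg hw hw₀ t)

theorem stmt_8_general (u₁ u₂ u₃ u₄ u₅ : ℝ → ℝ)
    (h₁ : ∀ t, HasDerivAt u₁ (-(u₃ t * u₅ t)) t)
    (h₂ : ∀ t, HasDerivAt u₂ (u₃ t * u₄ t) t)
    (h₃ : ∀ t, HasDerivAt u₃ (u₁ t * u₅ t - u₂ t * u₄ t) t)
    (h₄ : ∀ t, HasDerivAt u₄ (u₂ t * u₃ t) t)
    (h₅ : ∀ t, HasDerivAt u₅ (-(u₁ t * u₃ t)) t)
    (hB₁ : u₁ 0 = u₅ 0) (hB₂ : u₂ 0 = -u₄ 0)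
    (b : ℝ) (hb : b = Real.sqrt ((u₃ 0) ^ 2 + (u₄ 0) ^ 2 + (u₅ 0) ^ 2)) :
    ∀ t : ℝ,
      u₃ t = ((b + u₃ 0) * Real.exp (b * t) - (b - u₃ 0) * Real.exp (-(b * t))) /
        ((1 + u₃ 0 / b) * Real.exp (b * t) + (1 - u₃ 0 / b) * Real.exp (-(b * t))) := by
  have hu₃ : Continuous u₃ := continuous_iff_continuousAt.mpr fun t => (h₃ t).continuousAt
  have h₁₅ (t : ℝ) : u₁ t - u₅ t = 0 :=
    eq_zero_of_hasDerivAt_mul_self_s8 (f := fun t => u₁ t - u₅ t) hu₃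
    (fun t => ((h₁ t).sub (h₅ t)).congr_deriv (by ring)) (sub_eq_zero.mpr hB₁) t
  have h₂₄ (t : ℝ) : u₂ t + u₄ t = 0 :=
    eq_zero_of_hasDerivAt_mul_self_s8 (f := fun t => u₂ t + u₄ t) hu₃
    (fun t => ((h₂ t).add (h₄ t)).congr_deriv (by ring)) (by rw [hB₂]; ring) t
  have hS : ∀ t, HasDerivAt (fun t => u₃ t ^ 2 + u₄ t ^ 2 + u₅ t ^ 2) 0 t := fun t =>
    ((((h₃ t).pow 2).add ((h₄ t).pow 2)).add ((h₅ t).pow 2)).congr_deriv (by ring)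
  have hb₂ : b ^ 2 = u₃ 0 ^ 2 + u₄ 0 ^ 2 + u₅ 0 ^ 2 := by rw [hb, sq_sqrt (by positivity)]
  refine riccati_eq_div (fun t => (h₃ t).congr_deriv ?_) (by nlinarith)
  have hconst : u₃ t ^ 2 + u₄ t ^ 2 + u₅ t ^ 2 = u₃ 0 ^ 2 + u₄ 0 ^ 2 + u₅ 0 ^ 2 :=
    is_const_of_deriv_eq_zero (fun x => (hS x).differentiableAt) (fun x => (hS x).deriv) t 0
  linear_combination u₅ t * h₁₅ t - u₄ t * h₂₄ t + hconst - hb₂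

/-- Explicit formula for the extremal control `u₃` in the special case
`B = 0`, i.e. `u₁(0) = u₅(0)`, `u₂(0) = -u₄(0)`. -/
theorem stmt_8 (u₁ u₂ u₃ u₄ u₅ : ℝ → ℝ)
    (h₁ : ∀ t, HasDerivAt u₁ (-(u₃ t * u₅ t)) t)
    (h₂ : ∀ t, HasDerivAt u₂ (u₃ t * u₄ t) t)
    (h₃ : ∀ t, HasDerivAt u₃ (u₁ t * u₅ t - u₂ t * u₄ t) t)
    (h₄ : ∀ t, HasDerivAt u₄ (u₂ t * u₃ t) t)
    (h₅ : ∀ t, HasDerivAt u₅ (-(u₁ t * u₃ t)) t)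
    (hB₁ : u₁ 0 = u₅ 0) (hB₂ : u₂ 0 = -u₄ 0)
    (hne : ¬(u₃ 0 = 0 ∧ u₄ 0 = 0 ∧ u₅ 0 = 0))
    (b : ℝ) (hb : b = Real.sqrt ((u₃ 0) ^ 2 + (u₄ 0) ^ 2 + (u₅ 0) ^ 2)) :
    ∀ t : ℝ,
      u₃ t = ((b + u₃ 0) * Real.exp (b * t) - (b - u₃ 0) * Real.exp (-(b * t))) /
        ((1 + u₃ 0 / b) * Real.exp (b * t) + (1 - u₃ 0 / b) * Real.exp (-(b * t))) :=
  stmt_8_general u₁ u₂ u₃ u₄ u₅ h₁ h₂ h₃ h₄ h₅ hB₁ hB₂ b hb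
end

section
/- Let u₁, u₂, u₃, u₄, u₅, u₆, x, y, z, θ, β, α : ℝ → ℝ be differentiable functions satisfying for all t ∈ ℝ the Hamiltonian system: u₁′ = −u₃u₅, u₂′ = u₃u₄, u₃′ = u₁u₅ − u₂u₄, u₄′ = u₂u₃ − u₅u₆, u₅′ = u₄u₆ − u₁u₃, u₆′ = 0, x′ = u₃ sin β, y′ = −u₃ cos β sin θ, z′ = u₃ cos β cos θ, θ′ = sec β·(u₄ cos α − u₅ sin α), β′ = u₄ sin α + u₅ cos α, α′ = −(u₄ cos α − u₅ sin α)·tan β, and assume cos β(t) ≠ 0 for all t ∈ ℝ. Then the right-invariant Hamiltonian ρ₁(t) = −u₁(t) cos α(t) cos β(t) + u₂(t) cos β(t) sin α(t) − u₃(t) sin β(t) is constant in t. -/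
/-!
Write `ρ₁ = cos β · P - u₃ sin β` with `P = -u₁ cos α + u₂ sin α`, and let `Q = u₁ sin α + u₂ cos α`,
`A = u₄ cos α - u₅ sin α`. The equations for `u₁, u₂` give `P' = u₃ β' + α' Q`, and the equation for `α`
gives `cos β · α' = -A sin β`, so `ρ₁' = -sin β (β' P + A Q + u₃')`. Now `(A, β')` and `(-P, Q)` are `(u₄, u₅)` and `(u₁, u₂)`
rotated by the same angle `α`, so their cross product `β' P + A Q` equals that of the unrotated
vectors, `u₂ u₄ - u₁ u₅ = -u₃'`.
-/

open Real

noncomputable def rho₁ (u₁ u₂ u₃ α β : ℝ → ℝ) (s : ℝ) : ℝ :=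
  -(u₁ s * cos (α s) * cos (β s)) + u₂ s * cos (β s) * sin (α s) - u₃ s * sin (β s)

theorem hasDerivAt_rho₁ {u₁ u₂ u₃ α β : ℝ → ℝ} {u₁' u₂' u₃' α' β' t : ℝ}
    (h₁ : HasDerivAt u₁ u₁' t) (h₂ : HasDerivAt u₂ u₂' t) (h₃ : HasDerivAt u₃ u₃' t)
    (hα : HasDerivAt α α' t) (hβ : HasDerivAt β β' t) :
    HasDerivAt (rho₁ u₁ u₂ u₃ α β)
      (-sin (β t) * β' * (-u₁ t * cos (α t) + u₂ t * sin (α t))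
        + cos (β t) * (-u₁' * cos (α t) + u₂' * sin (α t) + α' * (u₁ t * sin (α t) + u₂ t * cos (α t)))
        - u₃' * sin (β t) - u₃ t * cos (β t) * β') t := by
  refine (((h₁.mul hα.cos).mul hβ.cos).neg.add ((h₂.mul hβ.cos).mul hα.sin) |>.sub
    (h₃.mul hβ.sin)).congr_deriv ?_
  simp only [Pi.mul_apply]
  ring

theorem rotation_preserves_cross (a b c d θ : ℝ) :
    (a * sin θ + b * cos θ) * (-c * cos θ + d * sin θ) + (a * cos θ - b * sin θ) * (c * sin θ + d * cos θ)
      = a * d - b * c := by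
  linear_combination (a * d - b * c) * sin_sq_add_cos_sq θ

theorem rho₁_derivative_eq_zero (u₁ u₂ u₃ u₄ u₅ α β : ℝ) (hβ : cos β ≠ 0) :
    -sin β * (u₄ * sin α + u₅ * cos α) * (-u₁ * cos α + u₂ * sin α)
      + cos β * (-(-(u₃ * u₅)) * cos α + u₃ * u₄ * sin α
        + -((u₄ * cos α - u₅ * sin α) * tan β) * (u₁ * sin α + u₂ * cos α))
      - (u₁ * u₅ - u₂ * u₄) * sin β - u₃ * cos β * (u₄ * sin α + u₅ * cos α) = 0 := by
  have hcos_tan : cos β * tan β = sin β := by rw [tan_eq_sin_div_cos, mul_div_cancel₀ _ hβ]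
  linear_combination (-(u₄ * cos α - u₅ * sin α) * (u₁ * sin α + u₂ * cos α)) * hcos_tan
    - sin β * rotation_preserves_cross u₄ u₅ u₁ u₂ α

theorem stmt_13_general (u₁ u₂ u₃ u₄ u₅ β α : ℝ → ℝ)
    (h₁ : ∀ t, HasDerivAt u₁ (-(u₃ t * u₅ t)) t)
    (h₂ : ∀ t, HasDerivAt u₂ (u₃ t * u₄ t) t)
    (h₃ : ∀ t, HasDerivAt u₃ (u₁ t * u₅ t - u₂ t * u₄ t) t)
    (hβ : ∀ t, HasDerivAt β (u₄ t * Real.sin (α t) + u₅ t * Real.cos (α t)) t)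
    (hα : ∀ t, HasDerivAt α
      (-((u₄ t * Real.cos (α t) - u₅ t * Real.sin (α t)) * Real.tan (β t))) t)
    (hcosβ : ∀ t : ℝ, Real.cos (β t) ≠ 0) :
    ∀ t : ℝ,
      (fun s => -(u₁ s * Real.cos (α s) * Real.cos (β s)) + u₂ s * Real.cos (β s) * Real.sin (α s) - u₃ s * Real.sin (β s)) t
      = (fun s => -(u₁ s * Real.cos (α s) * Real.cos (β s)) + u₂ s * Real.cos (β s) * Real.sin (α s) - u₃ s * Real.sin (β s)) 0 := by
  have hderiv (t : ℝ) : HasDerivAt (rho₁ u₁ u₂ u₃ α β) 0 t := by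
    convert hasDerivAt_rho₁ (h₁ t) (h₂ t) (h₃ t) (hα t) (hβ t) using 1
    exact (rho₁_derivative_eq_zero _ _ _ _ _ _ _ (hcosβ t)).symm
  exact fun t ↦ is_const_of_deriv_eq_zero (fun s ↦ (hderiv s).differentiableAt)
    (fun s ↦ (hderiv s).deriv) t 0

/-- The right-invariant Hamiltonian ρ₁ = -u₁ cos α cos β + u₂ cos β sin α - u₃ sin β is a first integral of the full
Hamiltonian system of PMP for the sub-Riemannian problem on SE(3). -/
theorem stmt_13 (u₁ u₂ u₃ u₄ u₅ u₆ x y z θ β α : ℝ → ℝ)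
    (h₁ : ∀ t, HasDerivAt u₁ (-(u₃ t * u₅ t)) t)
    (h₂ : ∀ t, HasDerivAt u₂ (u₃ t * u₄ t) t)
    (h₃ : ∀ t, HasDerivAt u₃ (u₁ t * u₅ t - u₂ t * u₄ t) t)
    (h₄ : ∀ t, HasDerivAt u₄ (u₂ t * u₃ t - u₅ t * u₆ t) t)
    (h₅ : ∀ t, HasDerivAt u₅ (u₄ t * u₆ t - u₁ t * u₃ t) t)
    (h₆ : ∀ t, HasDerivAt u₆ 0 t)
    (hx : ∀ t, HasDerivAt x (u₃ t * Real.sin (β t)) t)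
    (hy : ∀ t, HasDerivAt y (-(u₃ t * Real.cos (β t) * Real.sin (θ t))) t)
    (hz : ∀ t, HasDerivAt z (u₃ t * Real.cos (β t) * Real.cos (θ t)) t)
    (hθ : ∀ t, HasDerivAt θ
      ((Real.cos (β t))⁻¹ * (u₄ t * Real.cos (α t) - u₅ t * Real.sin (α t))) t)
    (hβ : ∀ t, HasDerivAt β (u₄ t * Real.sin (α t) + u₅ t * Real.cos (α t)) t)
    (hα : ∀ t, HasDerivAt α
      (-((u₄ t * Real.cos (α t) - u₅ t * Real.sin (α t)) * Real.tan (β t))) t)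
    (hcosβ : ∀ t : ℝ, Real.cos (β t) ≠ 0) :
    ∀ t : ℝ,
      (fun s => -(u₁ s * Real.cos (α s) * Real.cos (β s)) + u₂ s * Real.cos (β s) * Real.sin (α s) - u₃ s * Real.sin (β s)) t
      = (fun s => -(u₁ s * Real.cos (α s) * Real.cos (β s)) + u₂ s * Real.cos (β s) * Real.sin (α s) - u₃ s * Real.sin (β s)) 0 :=
  stmt_13_general u₁ u₂ u₃ u₄ u₅ β α h₁ h₂ h₃ hβ hα hcosβ
end

section
/- Let u₁, u₂, u₃, u₄, u₅, u₆, x, y, z, θ, β, α : ℝ → ℝ be differentiable functions satisfying for all t ∈ ℝ the Hamiltonian system: u₁′ = −u₃u₅, u₂′ = u₃u₄, u₃′ = u₁u₅ − u₂u₄, u₄′ = u₂u₃ − u₅u₆, u₅′ = u₄u₆ − u₁u₃, u₆′ = 0, x′ = u₃ sin β, y′ = −u₃ cos β sin θ, z′ = u₃ cos β cos θ, θ′ = sec β·(u₄ cos α − u₅ sin α), β′ = u₄ sin α + u₅ cos α, α′ = −(u₄ cos α − u₅ sin α)·tan β, and assume cos β(t) ≠ 0 for all t ∈ ℝ. Then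 the right-invariant Hamiltonian ρ₂(t) = −cos θ(t)·(u₂(t) cos α(t) + u₁(t) sin α(t)) + (u₃(t) cos β(t) + (−u₁(t) cos α(t) + u₂(t) sin α(t))·sin β(t))·sin θ(t) is constant in t. -/
/-!
`ρ₂` is built from planar rotations: with `Q = u₂ cos α + u₁ sin α`, `P = -u₁ cos α + u₂ sin α`
and `R = u₃ cos β + P sin β`, one has `ρ₂ = -Q cos θ + R sin θ`. Along the flow, writing
`w = u₄ cos α - u₅ sin α`, one finds `Q' = w (u₃ + P tan β)` and `R' = -w Q / cos β`. Since
`θ' = w / cos β` and `R / cos β = u₃ + P tan β`, all contributions to `ρ₂'` cancel.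
-/

open Real

noncomputable def trigComb (a b φ : ℝ → ℝ) (s : ℝ) : ℝ :=
  a s * cos (φ s) + b s * sin (φ s)

theorem hasDerivAt_trigComb {a b φ : ℝ → ℝ} {a' b' φ' t : ℝ} (ha : HasDerivAt a a' t)
    (hb : HasDerivAt b b' t) (hφ : HasDerivAt φ φ' t) :
    HasDerivAt (trigComb a b φ)
      (a' * cos (φ t) + b' * sin (φ t) + φ' * trigComb b (-a) φ t) t := by
  have h := (ha.mul ((hasDerivAt_cos (φ t)).comp t hφ)).add
    (hb.mul ((hasDerivAt_sin (φ t)).comp t hφ))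
  exact h.congr_deriv (by simp only [trigComb, Pi.neg_apply, Function.comp_apply]; ring)

section HamiltonianFlow

variable {u₁ u₂ u₃ u₄ u₅ θ β α : ℝ → ℝ} {t : ℝ}

theorem hasDerivAt_trigComb_neg_u₁_u₂
    (h₁ : HasDerivAt u₁ (-(u₃ t * u₅ t)) t) (h₂ : HasDerivAt u₂ (u₃ t * u₄ t) t)
    (hα : HasDerivAt α (-((u₄ t * cos (α t) - u₅ t * sin (α t)) * tan (β t))) t) :
    HasDerivAt (trigComb (-u₁) u₂ α)
      (u₃ t * (u₄ t * sin (α t) + u₅ t * cos (α t))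
        - (u₄ t * cos (α t) - u₅ t * sin (α t)) * tan (β t) * trigComb u₂ u₁ α t) t :=
  (hasDerivAt_trigComb h₁.neg h₂ hα).congr_deriv (by simp only [trigComb, Pi.neg_apply]; ring)

theorem hasDerivAt_trigComb_u₂_u₁
    (h₁ : HasDerivAt u₁ (-(u₃ t * u₅ t)) t) (h₂ : HasDerivAt u₂ (u₃ t * u₄ t) t)
    (hα : HasDerivAt α (-((u₄ t * cos (α t) - u₅ t * sin (α t)) * tan (β t))) t) :
    HasDerivAt (trigComb u₂ u₁ α)
      ((u₄ t * cos (α t) - u₅ t * sin (α t))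
        * (u₃ t + tan (β t) * trigComb (-u₁) u₂ α t)) t :=
  (hasDerivAt_trigComb h₂ h₁ hα).congr_deriv (by simp only [trigComb, Pi.neg_apply]; ring)

theorem hasDerivAt_trigComb_u₃
    (h₁ : HasDerivAt u₁ (-(u₃ t * u₅ t)) t) (h₂ : HasDerivAt u₂ (u₃ t * u₄ t) t)
    (h₃ : HasDerivAt u₃ (u₁ t * u₅ t - u₂ t * u₄ t) t)
    (hβ : HasDerivAt β (u₄ t * sin (α t) + u₅ t * cos (α t)) t)
    (hα : HasDerivAt α (-((u₄ t * cos (α t) - u₅ t * sin (α t)) * tan (β t))) t)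
    (hcosβ : cos (β t) ≠ 0) :
    HasDerivAt (trigComb u₃ (trigComb (-u₁) u₂ α) β)
      (-((u₄ t * cos (α t) - u₅ t * sin (α t)) * trigComb u₂ u₁ α t / cos (β t))) t := by
  refine (hasDerivAt_trigComb h₃ (hasDerivAt_trigComb_neg_u₁_u₂ h₁ h₂ hα) hβ).congr_deriv ?_
  simp only [trigComb, Pi.neg_apply, tan_eq_sin_div_cos]
  field_simp
  -- `u₁ u₅ - u₂ u₄ = -(β' P + w Q)`, read off in the frame rotated by `α`
  linear_combination -(u₄ t * cos (α t) - u₅ t * sin (α t)) * (u₂ t * cos (α t)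
    + u₁ t * sin (α t)) * sin_sq_add_cos_sq (β t) - (u₁ t * u₅ t - u₂ t * u₄ t) * cos (β t) ^ 2
    * sin_sq_add_cos_sq (α t)

theorem hasDerivAt_rho₂_zero
    (h₁ : HasDerivAt u₁ (-(u₃ t * u₅ t)) t) (h₂ : HasDerivAt u₂ (u₃ t * u₄ t) t)
    (h₃ : HasDerivAt u₃ (u₁ t * u₅ t - u₂ t * u₄ t) t)
    (hθ : HasDerivAt θ ((cos (β t))⁻¹ * (u₄ t * cos (α t) - u₅ t * sin (α t))) t)
    (hβ : HasDerivAt β (u₄ t * sin (α t) + u₅ t * cos (α t)) t)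
    (hα : HasDerivAt α (-((u₄ t * cos (α t) - u₅ t * sin (α t)) * tan (β t))) t)
    (hcosβ : cos (β t) ≠ 0) :
    HasDerivAt (trigComb (-trigComb u₂ u₁ α) (trigComb u₃ (trigComb (-u₁) u₂ α) β) θ) 0 t := by
  refine (hasDerivAt_trigComb (hasDerivAt_trigComb_u₂_u₁ h₁ h₂ hα).neg
    (hasDerivAt_trigComb_u₃ h₁ h₂ h₃ hβ hα hcosβ) hθ).congr_deriv ?_
  simp only [trigComb, Pi.neg_apply, tan_eq_sin_div_cos]
  field_simp
  ring

end HamiltonianFlow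

theorem stmt_14_general (u₁ u₂ u₃ u₄ u₅ θ β α : ℝ → ℝ)
    (h₁ : ∀ t, HasDerivAt u₁ (-(u₃ t * u₅ t)) t)
    (h₂ : ∀ t, HasDerivAt u₂ (u₃ t * u₄ t) t)
    (h₃ : ∀ t, HasDerivAt u₃ (u₁ t * u₅ t - u₂ t * u₄ t) t)
    (hθ : ∀ t, HasDerivAt θ
      ((Real.cos (β t))⁻¹ * (u₄ t * Real.cos (α t) - u₅ t * Real.sin (α t))) t)
    (hβ : ∀ t, HasDerivAt β (u₄ t * Real.sin (α t) + u₅ t * Real.cos (α t)) t)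
    (hα : ∀ t, HasDerivAt α
      (-((u₄ t * Real.cos (α t) - u₅ t * Real.sin (α t)) * Real.tan (β t))) t)
    (hcosβ : ∀ t : ℝ, Real.cos (β t) ≠ 0) :
    ∀ t : ℝ,
      (fun s => -(Real.cos (θ s) * (u₂ s * Real.cos (α s) + u₁ s * Real.sin (α s))) + (u₃ s * Real.cos (β s) + (-(u₁ s * Real.cos (α s)) + u₂ s * Real.sin (α s)) * Real.sin (β s)) * Real.sin (θ s)) t
      = (fun s => -(Real.cos (θ s) * (u₂ s * Real.cos (α s) + u₁ s * Real.sin (α s))) + (u₃ s * Real.cos (β s) + (-(u₁ s * Real.cos (α s)) + u₂ s * Real.sin (α s)) * Real.sin (β s)) * Real.sin (θ s)) 0 := by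
  intro t
  have hderiv s := hasDerivAt_rho₂_zero (h₁ s) (h₂ s) (h₃ s) (hθ s) (hβ s) (hα s) (hcosβ s)
  have hconst := is_const_of_deriv_eq_zero (fun s => (hderiv s).differentiableAt)
    (fun s => (hderiv s).deriv) t 0
  simp only [trigComb, Pi.neg_apply] at hconst
  linear_combination hconst

/-- The right-invariant Hamiltonian ρ₂ is a first integral of the full
Hamiltonian system of PMP for the sub-Riemannian problem on SE(3). -/
theorem stmt_14 (u₁ u₂ u₃ u₄ u₅ u₆ x y z θ β α : ℝ → ℝ)
    (h₁ : ∀ t, HasDerivAt u₁ (-(u₃ t * u₅ t)) t)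
    (h₂ : ∀ t, HasDerivAt u₂ (u₃ t * u₄ t) t)
    (h₃ : ∀ t, HasDerivAt u₃ (u₁ t * u₅ t - u₂ t * u₄ t) t)
    (h₄ : ∀ t, HasDerivAt u₄ (u₂ t * u₃ t - u₅ t * u₆ t) t)
    (h₅ : ∀ t, HasDerivAt u₅ (u₄ t * u₆ t - u₁ t * u₃ t) t)
    (h₆ : ∀ t, HasDerivAt u₆ 0 t)
    (hx : ∀ t, HasDerivAt x (u₃ t * Real.sin (β t)) t)
    (hy : ∀ t, HasDerivAt y (-(u₃ t * Real.cos (β t) * Real.sin (θ t))) t)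
    (hz : ∀ t, HasDerivAt z (u₃ t * Real.cos (β t) * Real.cos (θ t)) t)
    (hθ : ∀ t, HasDerivAt θ
      ((Real.cos (β t))⁻¹ * (u₄ t * Real.cos (α t) - u₅ t * Real.sin (α t))) t)
    (hβ : ∀ t, HasDerivAt β (u₄ t * Real.sin (α t) + u₅ t * Real.cos (α t)) t)
    (hα : ∀ t, HasDerivAt α
      (-((u₄ t * Real.cos (α t) - u₅ t * Real.sin (α t)) * Real.tan (β t))) t)
    (hcosβ : ∀ t : ℝ, Real.cos (β t) ≠ 0) :
    ∀ t : ℝ,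
      (fun s => -(Real.cos (θ s) * (u₂ s * Real.cos (α s) + u₁ s * Real.sin (α s))) + (u₃ s * Real.cos (β s) + (-(u₁ s * Real.cos (α s)) + u₂ s * Real.sin (α s)) * Real.sin (β s)) * Real.sin (θ s)) t
      = (fun s => -(Real.cos (θ s) * (u₂ s * Real.cos (α s) + u₁ s * Real.sin (α s))) + (u₃ s * Real.cos (β s) + (-(u₁ s * Real.cos (α s)) + u₂ s * Real.sin (α s)) * Real.sin (β s)) * Real.sin (θ s)) 0 :=
  stmt_14_general u₁ u₂ u₃ u₄ u₅ θ β α h₁ h₂ h₃ hθ hβ hα hcosβ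
end

section
/- Let u₁, u₂, u₃, u₄, u₅, u₆, x, y, z, θ, β, α : ℝ → ℝ be differentiable functions satisfying for all t ∈ ℝ the Hamiltonian system: u₁′ = −u₃u₅, u₂′ = u₃u₄, u₃′ = u₁u₅ − u₂u₄, u₄′ = u₂u₃ − u₅u₆, u₅′ = u₄u₆ − u₁u₃, u₆′ = 0, x′ = u₃ sin β, y′ = −u₃ cos β sin θ, z′ = u₃ cos β cos θ, θ′ = sec β·(u₄ cos α − u₅ sin α), β′ = u₄ sin α + u₅ cos α, α′ = −(u₄ cos α − u₅ sin α)·tan β, and assume cos β(t) ≠ 0 for all t ∈ ℝ. Then the right-invariant Hamiltonian ρ₃(t) = −u₃(t) cos β(t) cos θ(t) + cos θ(t)·(u₁(t) cos α(t) − u₂(t) sin α(t))·sin β(t) − (u₂(t) cos α(t) + u₁(t) sin α(t))·sin θ(t) is constant in t. -/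
/-!
Rotate the momentum `(u₁, u₂, u₃)` by `α` about `OZ` and then by `β` about `OY`; call the
resulting components `q = u₂ cos α + u₁ sin α` and `r = u₃ cos β - (u₁ cos α - u₂ sin α) sin β`.
Along the Hamiltonian flow the pair `(r, q)` turns with angular velocity `θ'`, i.e.
`r' = -θ' q` and `q' = θ' r`, while `ρ₃ = -(r cos θ + q sin θ)` pairs `(r, q)` with the unit
vector of angle `θ`, which turns at the same rate; so `ρ₃` is constant.
The angular velocity is handled as `ω` with `ω cos β = u₄ cos α - u₅ sin α`, so that
`α' = -ω sin β` and all the identities involved are polynomial.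
-/

open Real

theorem hasDerivAt_mul_cos_add_mul_sin_eq_zero {r q φ : ℝ → ℝ} {ω t : ℝ}
    (hr : HasDerivAt r (-(ω * q t)) t) (hq : HasDerivAt q (ω * r t) t)
    (hφ : HasDerivAt φ ω t) :
    HasDerivAt (fun s => r s * cos (φ s) + q s * sin (φ s)) 0 t :=
  ((hr.mul hφ.cos).add (hq.mul hφ.sin)).congr_deriv (by ring)

namespace SE3

noncomputable def momentumP (u₁ u₂ α : ℝ → ℝ) (s : ℝ) : ℝ :=
  u₁ s * cos (α s) - u₂ s * sin (α s)

noncomputable def momentumQ (u₁ u₂ α : ℝ → ℝ) (s : ℝ) : ℝ :=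
  u₂ s * cos (α s) + u₁ s * sin (α s)

noncomputable def momentumR (u₁ u₂ u₃ β α : ℝ → ℝ) (s : ℝ) : ℝ :=
  u₃ s * cos (β s) - momentumP u₁ u₂ α s * sin (β s)

variable {u₁ u₂ u₃ u₄ u₅ β α : ℝ → ℝ} {ω t : ℝ}

theorem hasDerivAt_momentumP (h₁ : HasDerivAt u₁ (-(u₃ t * u₅ t)) t)
    (h₂ : HasDerivAt u₂ (u₃ t * u₄ t) t) (hα : HasDerivAt α (-(ω * sin (β t))) t) :
    HasDerivAt (momentumP u₁ u₂ α)
      (-(u₃ t * (u₄ t * sin (α t) + u₅ t * cos (α t))) + ω * sin (β t) * momentumQ u₁ u₂ α t)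
      t := by
  refine ((h₁.mul hα.cos).sub (h₂.mul hα.sin)).congr_deriv ?_
  simp only [momentumQ]
  ring

theorem hasDerivAt_momentumQ (h₁ : HasDerivAt u₁ (-(u₃ t * u₅ t)) t)
    (h₂ : HasDerivAt u₂ (u₃ t * u₄ t) t) (hα : HasDerivAt α (-(ω * sin (β t))) t)
    (hω : ω * cos (β t) = u₄ t * cos (α t) - u₅ t * sin (α t)) :
    HasDerivAt (momentumQ u₁ u₂ α) (ω * momentumR u₁ u₂ u₃ β α t) t := by
  refine ((h₂.mul hα.cos).add (h₁.mul hα.sin)).congr_deriv ?_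
  simp only [momentumR, momentumP]
  linear_combination (-u₃ t) * hω

theorem hasDerivAt_momentumR (h₁ : HasDerivAt u₁ (-(u₃ t * u₅ t)) t)
    (h₂ : HasDerivAt u₂ (u₃ t * u₄ t) t) (h₃ : HasDerivAt u₃ (u₁ t * u₅ t - u₂ t * u₄ t) t)
    (hβ : HasDerivAt β (u₄ t * sin (α t) + u₅ t * cos (α t)) t)
    (hα : HasDerivAt α (-(ω * sin (β t))) t)
    (hω : ω * cos (β t) = u₄ t * cos (α t) - u₅ t * sin (α t)) :
    HasDerivAt (momentumR u₁ u₂ u₃ β α) (-(ω * momentumQ u₁ u₂ α t)) t := by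
  refine ((h₃.mul hβ.cos).sub ((hasDerivAt_momentumP h₁ h₂ hα).mul hβ.sin)).congr_deriv ?_
  -- with `p = momentumP`, `q = momentumQ`: `u₁ u₅ - u₂ u₄ = p β' - q ω cos β`
  -- once `cos² α + sin² α = 1` is used
  linear_combination (norm := skip) momentumQ u₁ u₂ α t * cos (β t) * hω
    - ω * momentumQ u₁ u₂ α t * sin_sq_add_cos_sq (β t)
    - cos (β t) * (u₁ t * u₅ t - u₂ t * u₄ t) * sin_sq_add_cos_sq (α t)
  simp only [momentumQ, momentumP]
  ring

end SE3

open SE3 in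
theorem stmt_15_general (u₁ u₂ u₃ u₄ u₅ θ β α : ℝ → ℝ)
    (h₁ : ∀ t, HasDerivAt u₁ (-(u₃ t * u₅ t)) t)
    (h₂ : ∀ t, HasDerivAt u₂ (u₃ t * u₄ t) t)
    (h₃ : ∀ t, HasDerivAt u₃ (u₁ t * u₅ t - u₂ t * u₄ t) t)
    (hθ : ∀ t, HasDerivAt θ
      ((Real.cos (β t))⁻¹ * (u₄ t * Real.cos (α t) - u₅ t * Real.sin (α t))) t)
    (hβ : ∀ t, HasDerivAt β (u₄ t * Real.sin (α t) + u₅ t * Real.cos (α t)) t)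
    (hα : ∀ t, HasDerivAt α
      (-((u₄ t * Real.cos (α t) - u₅ t * Real.sin (α t)) * Real.tan (β t))) t)
    (hcosβ : ∀ t : ℝ, Real.cos (β t) ≠ 0) :
    ∀ t : ℝ,
      (fun s => -(u₃ s * Real.cos (β s) * Real.cos (θ s)) + Real.cos (θ s) * (u₁ s * Real.cos (α s) - u₂ s * Real.sin (α s)) * Real.sin (β s) - (u₂ s * Real.cos (α s) + u₁ s * Real.sin (α s)) * Real.sin (θ s)) t
      = (fun s => -(u₃ s * Real.cos (β s) * Real.cos (θ s)) + Real.cos (θ s) * (u₁ s * Real.cos (α s) - u₂ s * Real.sin (α s)) * Real.sin (β s) - (u₂ s * Real.cos (α s) + u₁ s * Real.sin (α s)) * Real.sin (θ s)) 0 := by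
  set ω : ℝ → ℝ := fun t => (cos (β t))⁻¹ * (u₄ t * cos (α t) - u₅ t * sin (α t))
  have hω : ∀ t, ω t * cos (β t) = u₄ t * cos (α t) - u₅ t * sin (α t) := fun t => by
    simp only [ω]
    field_simp [hcosβ t]
  have hα' : ∀ t, HasDerivAt α (-(ω t * sin (β t))) t := fun t =>
    (hα t).congr_deriv (by simp only [ω, tan_eq_sin_div_cos]; ring)
  have hderiv : ∀ t, HasDerivAt (fun s => momentumR u₁ u₂ u₃ β α s * cos (θ s) +
      momentumQ u₁ u₂ α s * sin (θ s)) 0 t := fun t =>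
    hasDerivAt_mul_cos_add_mul_sin_eq_zero
      (hasDerivAt_momentumR (h₁ t) (h₂ t) (h₃ t) (hβ t) (hα' t) (hω t))
      (hasDerivAt_momentumQ (h₁ t) (h₂ t) (hα' t) (hω t)) (hθ t)
  intro t
  have hconst := is_const_of_deriv_eq_zero (fun s => (hderiv s).differentiableAt)
    (fun s => (hderiv s).deriv) t 0
  simp only [momentumR, momentumP, momentumQ] at hconst
  beta_reduce
  linear_combination -hconst

/-- The right-invariant Hamiltonian ρ₃ is a first integral of the full
Hamiltonian system of PMP for the sub-Riemannian problem on SE(3). -/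
theorem stmt_15 (u₁ u₂ u₃ u₄ u₅ u₆ x y z θ β α : ℝ → ℝ)
    (h₁ : ∀ t, HasDerivAt u₁ (-(u₃ t * u₅ t)) t)
    (h₂ : ∀ t, HasDerivAt u₂ (u₃ t * u₄ t) t)
    (h₃ : ∀ t, HasDerivAt u₃ (u₁ t * u₅ t - u₂ t * u₄ t) t)
    (h₄ : ∀ t, HasDerivAt u₄ (u₂ t * u₃ t - u₅ t * u₆ t) t)
    (h₅ : ∀ t, HasDerivAt u₅ (u₄ t * u₆ t - u₁ t * u₃ t) t)
    (h₆ : ∀ t, HasDerivAt u₆ 0 t)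
    (hx : ∀ t, HasDerivAt x (u₃ t * Real.sin (β t)) t)
    (hy : ∀ t, HasDerivAt y (-(u₃ t * Real.cos (β t) * Real.sin (θ t))) t)
    (hz : ∀ t, HasDerivAt z (u₃ t * Real.cos (β t) * Real.cos (θ t)) t)
    (hθ : ∀ t, HasDerivAt θ
      ((Real.cos (β t))⁻¹ * (u₄ t * Real.cos (α t) - u₅ t * Real.sin (α t))) t)
    (hβ : ∀ t, HasDerivAt β (u₄ t * Real.sin (α t) + u₅ t * Real.cos (α t)) t)
    (hα : ∀ t, HasDerivAt α
      (-((u₄ t * Real.cos (α t) - u₅ t * Real.sin (α t)) * Real.tan (β t))) t)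
    (hcosβ : ∀ t : ℝ, Real.cos (β t) ≠ 0) :
    ∀ t : ℝ,
      (fun s => -(u₃ s * Real.cos (β s) * Real.cos (θ s)) + Real.cos (θ s) * (u₁ s * Real.cos (α s) - u₂ s * Real.sin (α s)) * Real.sin (β s) - (u₂ s * Real.cos (α s) + u₁ s * Real.sin (α s)) * Real.sin (θ s)) t
      = (fun s => -(u₃ s * Real.cos (β s) * Real.cos (θ s)) + Real.cos (θ s) * (u₁ s * Real.cos (α s) - u₂ s * Real.sin (α s)) * Real.sin (β s) - (u₂ s * Real.cos (α s) + u₁ s * Real.sin (α s)) * Real.sin (θ s)) 0 :=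
  stmt_15_general u₁ u₂ u₃ u₄ u₅ θ β α h₁ h₂ h₃ hθ hβ hα hcosβ
end
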